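/- (Corollary 4.6(ii).) Suppose the convex feasibility problem has no solution (f(x) > 0 for all x ∈ ℝⁿ) and the envelope f is strictly convex. Let {x^k} be any sequence generated by Algorithm 3.1 (for arbitrary M > 0 and x⁰). If f has no global minimizer, then either the sequence {x^k} is unbounded, or the sequence ‖x^{k+1} − x^k‖ does not converge to zero. -/

import Mathlib

/-!
Argue by contradiction: let the iterates stay in a ball and let the steps tend to zero.
The envelope is continuous and positive, so it is bounded below by some `c > 0` on the ball;
hence `λ_k ≥ c / M²`, and `ν^k`, which is a subgradient of the envelope at `x^k`, satisfies
`‖ν^k‖ ≤ (M² / c) ‖x^{k+1} - x^k‖ → 0`. At a cluster point `a` of the iterates the subgradient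
inequality `f(x^k) ≤ f(y) + ‖ν^k‖ ‖x^k - y‖` passes to the limit `f(a) ≤ f(y)`, so `a` is a
global minimizer.
-/

open Filter Topology

noncomputable section

abbrev Euc (n : ℕ) := EuclideanSpace ℝ (Fin n)

/-- `ξ` is a subgradient of `g` at `x`. -/
def IsSubgradAt {n : ℕ} (g : Euc n → ℝ) (x ξ : Euc n) : Prop :=
  ∀ y : Euc n, g x + (inner ℝ ξ (y - x) : ℝ) ≤ g y

/-- The envelope `f(x) = max_i f_i(x)` of finitely many functions. -/
def envl {n m : ℕ} [NeZero m] (f : Fin m → Euc n → ℝ) (x : Euc n) : ℝ :=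
  Finset.univ.sup' Finset.univ_nonempty fun i => f i x

/-- The sequence `x` with relaxation parameters `lam` is generated by Algorithm 3.1
with data `M` for the family `f`. -/
def IsAlgSeq {n m : ℕ} [NeZero m] (f : Fin m → Euc n → ℝ) (M : ℝ)
    (x : ℕ → Euc n) (lam : ℕ → ℝ) : Prop :=
  ∀ k : ℕ, 0 ≤ lam k ∧
    max 0 (envl f (x k)) ≤ lam k * M ^ 2 ∧
    lam k * M ^ 2 ≤ 2 * max 0 (envl f (x k)) ∧
    ∃ (w : Fin m → ℝ) (ξ : Fin m → Euc n),
      (∀ i, 0 ≤ w i) ∧ (∑ i, w i) = 1 ∧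
      (∀ i, f i (x k) < envl f (x k) → w i = 0) ∧
      (∀ i, IsSubgradAt (f i) (x k) (ξ i)) ∧
      x (k + 1) = x k - lam k • ∑ i, w i • ξ i

section Envelope

variable {n m : ℕ} [NeZero m] {f : Fin m → Euc n → ℝ}

theorem le_envl (i : Fin m) (x : Euc n) : f i x ≤ envl f x :=
  Finset.le_sup' (fun j => f j x) (Finset.mem_univ i)

theorem continuous_envl (hf : ∀ i, Continuous (f i)) : Continuous (envl f) :=
  Continuous.finset_sup'_apply _ fun i _ => hf i

theorem isSubgradAt_envl_sum {x : Euc n} {w : Fin m → ℝ} {ξ : Fin m → Euc n}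
    (hw0 : ∀ i, 0 ≤ w i) (hw1 : ∑ i, w i = 1) (hactive : ∀ i, f i x < envl f x → w i = 0)
    (hξ : ∀ i, IsSubgradAt (f i) x (ξ i)) :
    IsSubgradAt (envl f) x (∑ i, w i • ξ i) := by
  intro y
  have hterm : ∀ i ∈ Finset.univ,
      w i * (envl f x + inner ℝ (ξ i) (y - x)) ≤ w i * envl f y := by
    intro i _
    by_cases hi : f i x < envl f x
    · simp [hactive i hi]
    · have hfi : f i x = envl f x := le_antisymm (le_envl i x) (not_lt.1 hi)
      exact mul_le_mul_of_nonneg_left (hfi ▸ (hξ i y).trans (le_envl i y)) (hw0 i)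
  calc envl f x + inner ℝ (∑ i, w i • ξ i) (y - x)
      = ∑ i, w i * (envl f x + inner ℝ (ξ i) (y - x)) := by
        simp only [sum_inner, real_inner_smul_left, mul_add, Finset.sum_add_distrib,
          ← Finset.sum_mul, hw1, one_mul]
    _ ≤ ∑ i, w i * envl f y := Finset.sum_le_sum hterm
    _ = envl f y := by rw [← Finset.sum_mul, hw1, one_mul]

theorem IsAlgSeq.exists_subgrad {M : ℝ} {x : ℕ → Euc n} {lam : ℕ → ℝ}
    (h : IsAlgSeq f M x lam) {c : ℝ} (hc : ∀ k, c ≤ envl f (x k)) (k : ℕ) :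
    ∃ ν, IsSubgradAt (envl f) (x k) ν ∧ c * ‖ν‖ ≤ M ^ 2 * ‖x (k + 1) - x k‖ := by
  obtain ⟨-, hlam, -, w, ξ, hw0, hw1, hactive, hξ, hstep⟩ := h k
  refine ⟨_, isSubgradAt_envl_sum hw0 hw1 hactive hξ, ?_⟩
  rw [hstep, sub_sub_cancel_left, norm_neg, norm_smul, Real.norm_eq_abs, ← mul_assoc,
    mul_comm (M ^ 2)]
  have hc_lam : c ≤ |lam k| * M ^ 2 :=
    (hc k).trans <| (le_max_right _ _).trans <| hlam.trans <|
      mul_le_mul_of_nonneg_right (le_abs_self _) (sq_nonneg M)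
  exact mul_le_mul_of_nonneg_right hc_lam (norm_nonneg _)

end Envelope

section Subgradient

variable {n : ℕ}

theorem IsSubgradAt.le_add_norm_mul {g : Euc n → ℝ} {x ξ : Euc n}
    (h : IsSubgradAt g x ξ) (y : Euc n) : g x ≤ g y + ‖ξ‖ * ‖x - y‖ := by
  have hinner : -inner ℝ ξ (y - x) ≤ ‖ξ‖ * ‖x - y‖ := by
    rw [← inner_neg_right, neg_sub]
    exact real_inner_le_norm _ _
  linarith [h y]

theorem exists_forall_le_of_isSubgradAt_tendsto_zero {g : Euc n → ℝ} (hg : Continuous g)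
    {x ν : ℕ → Euc n} {C : ℝ} (hC : ∀ k, ‖x k‖ ≤ C) (hsub : ∀ k, IsSubgradAt g (x k) (ν k))
    (hν : Tendsto (fun k => ‖ν k‖) atTop (𝓝 0)) : ∃ a, ∀ y, g a ≤ g y := by
  obtain ⟨a, -, φ, hφ, hlim⟩ := (isCompact_closedBall (0 : Euc n) C).tendsto_subseq
    fun k => mem_closedBall_zero_iff.2 (hC k)
  refine ⟨a, fun y => le_of_tendsto_of_tendsto' ((hg.tendsto a).comp hlim) ?_
    fun j => (hsub (φ j)).le_add_norm_mul y⟩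
  simpa using tendsto_const_nhds.add ((hν.comp hφ.tendsto_atTop).mul (hlim.sub_const y).norm)

end Subgradient

theorem exists_pos_forall_le_of_norm_le {E : Type*} [SeminormedAddCommGroup E] [ProperSpace E]
    {g : E → ℝ} (hg : Continuous g) (hpos : ∀ y, 0 < g y) {x : ℕ → E} {C : ℝ}
    (hC : ∀ k, ‖x k‖ ≤ C) : ∃ c > 0, ∀ k, c ≤ g (x k) := by
  have hmem : ∀ k, x k ∈ Metric.closedBall (0 : E) C := fun k => mem_closedBall_zero_iff.2 (hC k)
  obtain ⟨z, -, hz⟩ := (isCompact_closedBall (0 : E) C).exists_isMinOn ⟨x 0, hmem 0⟩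
    hg.continuousOn
  exact ⟨g z, hpos z, fun k => hz (hmem k)⟩

theorem stmt9_general
    {n m : ℕ} [NeZero m] (f : Fin m → Euc n → ℝ)
    (hconv : ∀ i, ConvexOn ℝ Set.univ (f i))
    (M : ℝ) (x : ℕ → Euc n) (lam : ℕ → ℝ)
    (halg : IsAlgSeq f M x lam)
    (hnosol : ∀ y : Euc n, 0 < envl f y)
    (hnomin : ¬ ∃ xs : Euc n, ∀ y : Euc n, envl f xs ≤ envl f y) :
    (¬ ∃ C : ℝ, ∀ k : ℕ, ‖x k‖ ≤ C) ∨
    ¬ Tendsto (fun k => ‖x (k + 1) - x k‖) atTop (𝓝 0) := by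
  by_contra! h
  obtain ⟨⟨C, hC⟩, hstep⟩ := h
  have hF : Continuous (envl f) :=
    continuous_envl fun i => continuousOn_univ.1 ((hconv i).continuousOn isOpen_univ)
  obtain ⟨c, hc, hcx⟩ := exists_pos_forall_le_of_norm_le hF hnosol hC
  choose ν hνsub hνle using halg.exists_subgrad hcx
  have hν : Tendsto (fun k => ‖ν k‖) atTop (𝓝 0) := by
    refine squeeze_zero (fun k => norm_nonneg _) (fun k => ?_)
      (by simpa using hstep.const_mul (M ^ 2 / c))
    rw [div_mul_eq_mul_div, le_div_iff₀ hc, mul_comm]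
    exact hνle k
  exact hnomin (exists_forall_le_of_isSubgradAt_tendsto_zero hF hC hνsub hν)

theorem stmt9
    {n m : ℕ} (hn : 0 < n) [NeZero m] (f : Fin m → Euc n → ℝ)
    (hconv : ∀ i, ConvexOn ℝ Set.univ (f i))
    (M : ℝ) (hM : 0 < M) (x : ℕ → Euc n) (lam : ℕ → ℝ)
    (halg : IsAlgSeq f M x lam) (x0 : Euc n) (hx0 : x 0 = x0)
    (hnosol : ∀ y : Euc n, 0 < envl f y)
    (hstrict : StrictConvexOn ℝ Set.univ (envl f))
    (hnomin : ¬ ∃ xs : Euc n, ∀ y : Euc n, envl f xs ≤ envl f y) :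
    (¬ ∃ C : ℝ, ∀ k : ℕ, ‖x k‖ ≤ C) ∨
    ¬ Tendsto (fun k => ‖x (k + 1) - x k‖) atTop (𝓝 0) :=
  stmt9_general f hconv M x lam halg hnosol hnomin
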